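/- Let G be a finite abelian group and A a finite set with at least 2 elements. For x, y ∈ A^G, there exists an invertible (bijective G-equivariant) map τ : A^G → A^G with (xG)τ = yG if and only if G_x = G_y. -/
import Mathlib


/-- The right action of `G` on configurations `A^G`: `(x · g) h = x (h g⁻¹)`. -/
def confMul {G A : Type*} [Group G] (x : G → A) (g : G) : G → A := fun h => x (h * g⁻¹)

/-- The `G`-orbit of a configuration `x ∈ A^G`. -/
def orbitOf {G A : Type*} [Group G] (x : G → A) : Set (G → A) := {y | ∃ g : G, y = confMul x g}

/-- `τ` is `G`-equivariant, i.e. a cellular automaton. -/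
def equivariant {G A : Type*} [Group G] (τ : (G → A) → (G → A)) : Prop :=
  ∀ x g, τ (confMul x g) = confMul (τ x) g

section Aux

variable {G A : Type*} [Group G]

lemma confMul_confMul (x : G → A) (a b : G) :
    confMul (confMul x a) b = confMul x (a * b) := by
  funext h
  simp [confMul, mul_inv_rev, mul_assoc]

lemma confMul_one (x : G → A) : confMul x 1 = x := by
  funext h; simp [confMul]

lemma mem_orbit_self (x : G → A) : x ∈ orbitOf x := ⟨1, (confMul_one x).symm⟩

lemma orbitOf_confMul (x : G → A) (a : G) : orbitOf (confMul x a) = orbitOf x := by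
  ext w
  constructor
  · rintro ⟨g, rfl⟩
    exact ⟨a * g, by rw [confMul_confMul]⟩
  · rintro ⟨g, rfl⟩
    exact ⟨a⁻¹ * g, by rw [confMul_confMul, mul_inv_cancel_left]⟩

lemma confMul_mem_orbit_iff (z : G → A) (g : G) (x : G → A) :
    confMul z g ∈ orbitOf x ↔ z ∈ orbitOf x := by
  constructor
  · rintro ⟨a, ha⟩
    refine ⟨a * g⁻¹, ?_⟩
    rw [← confMul_confMul, ← ha, confMul_confMul, mul_inv_cancel, confMul_one]
  · rintro ⟨a, rfl⟩
    exact ⟨a * g, confMul_confMul x a g⟩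

lemma key {x y : G → A} (hst : ∀ h, confMul x h = x → confMul y h = y)
    {g g' : G} (h : confMul x g = confMul x g') : confMul y g = confMul y g' := by
  have h1 : confMul x (g * g'⁻¹) = x := by
    have := congrArg (fun z => confMul z g'⁻¹) h
    simp only [confMul_confMul] at this
    rw [this, mul_inv_cancel, confMul_one]
  have h2 := hst _ h1
  have := congrArg (fun z => confMul z g') h2
  simp only [confMul_confMul] at this
  rwa [inv_mul_cancel_right] at this

end Aux

/-- Over a finite abelian group `G`, there is an invertible (bijective `G`-equivariant)
map sending the orbit `xG` onto `yG` if and only if `G_x = G_y`. -/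
theorem stmt7 {G A : Type*} [CommGroup G] [Fintype G] [Fintype A]
    (hA : 2 ≤ Fintype.card A) (x y : G → A) :
    (∃ τ : (G → A) → (G → A), equivariant τ ∧ Function.Bijective τ ∧
        τ '' orbitOf x = orbitOf y) ↔
      ∀ h : G, confMul x h = x ↔ confMul y h = y := by
  constructor
  · rintro ⟨τ, heq, hbij, himg⟩ h
    have hx : τ x ∈ orbitOf y := by
      rw [← himg]; exact ⟨x, mem_orbit_self x, rfl⟩
    obtain ⟨g, hg⟩ := hx
    have step : confMul y (g * h) = confMul y g ↔ confMul y h = y := by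
      constructor
      · intro H
        have := congrArg (fun z => confMul z g⁻¹) H
        simp only [confMul_confMul] at this
        rwa [mul_comm g h, mul_inv_cancel_right, mul_inv_cancel, confMul_one] at this
      · intro H
        rw [mul_comm g h, ← confMul_confMul, H]
    rw [← hbij.injective.eq_iff, heq, hg, confMul_confMul, step]
  · intro hst
    by_cases hxy : orbitOf x = orbitOf y
    · exact ⟨id, fun _ _ => rfl, Function.bijective_id, by simpa using hxy⟩
    · classical
      have hdisj : ∀ z : G → A, z ∈ orbitOf x → z ∈ orbitOf y → False := by
        rintro z ⟨a, rfl⟩ ⟨b, hb⟩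
        exact hxy (by rw [← orbitOf_confMul x a, hb, orbitOf_confMul])
      set τ : (G → A) → (G → A) := fun z =>
        if hz : z ∈ orbitOf x then confMul y (Classical.choose hz)
        else if hz : z ∈ orbitOf y then confMul x (Classical.choose hz)
        else z with hτ
      have hxg : ∀ g : G, τ (confMul x g) = confMul y g := by
        intro g
        have hz : confMul x g ∈ orbitOf x := ⟨g, rfl⟩
        have h1 : τ (confMul x g) = confMul y (Classical.choose hz) := by
          simp only [hτ, dif_pos hz]
        rw [h1]
        exact (key (fun h hh => (hst h).1 hh) (Classical.choose_spec hz)).symm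
      have hyg : ∀ g : G, τ (confMul y g) = confMul x g := by
        intro g
        have hz2 : confMul y g ∈ orbitOf y := ⟨g, rfl⟩
        have hz1 : confMul y g ∉ orbitOf x := fun h => hdisj _ h hz2
        have h1 : τ (confMul y g) = confMul x (Classical.choose hz2) := by
          simp only [hτ, dif_neg hz1, dif_pos hz2]
        rw [h1]
        exact (key (fun h hh => (hst h).2 hh) (Classical.choose_spec hz2)).symm
      have hout : ∀ z, z ∉ orbitOf x → z ∉ orbitOf y → τ z = z := by
        intro z h1 h2
        simp only [hτ, dif_neg h1, dif_neg h2]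
      have heqv : equivariant τ := by
        intro z g
        by_cases hz1 : z ∈ orbitOf x
        · obtain ⟨a, rfl⟩ := hz1
          rw [confMul_confMul, hxg, hxg, confMul_confMul]
        · by_cases hz2 : z ∈ orbitOf y
          · obtain ⟨b, rfl⟩ := hz2
            rw [confMul_confMul, hyg, hyg, confMul_confMul]
          · have h1 : confMul z g ∉ orbitOf x :=
              fun h => hz1 ((confMul_mem_orbit_iff z g x).1 h)
            have h2 : confMul z g ∉ orbitOf y :=
              fun h => hz2 ((confMul_mem_orbit_iff z g y).1 h)
            rw [hout z hz1 hz2, hout _ h1 h2]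
      have hinv : Function.Involutive τ := by
        intro z
        by_cases hz1 : z ∈ orbitOf x
        · obtain ⟨a, rfl⟩ := hz1
          rw [hxg, hyg]
        · by_cases hz2 : z ∈ orbitOf y
          · obtain ⟨b, rfl⟩ := hz2
            rw [hyg, hxg]
          · rw [hout z hz1 hz2, hout z hz1 hz2]
      refine ⟨τ, heqv, hinv.bijective, ?_⟩
      ext w
      constructor
      · rintro ⟨z, ⟨a, rfl⟩, rfl⟩
        rw [hxg]; exact ⟨a, rfl⟩
      · rintro ⟨b, rfl⟩
        exact ⟨confMul x b, ⟨b, rfl⟩, hxg b⟩
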